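/- The two-variable Rogers-Szegő polynomials satisfy H_{n+1}(t_1, t_2) = (1 + t_1 + t_2)H_n(t_1,t_2) + (t_1 t_2 + t_1 + t_2)(q^n - 1)H_{n-1}(t_1,t_2) + t_1 t_2 (q^n - 1)(q^{n-1} - 1)H_{n-2}(t_1,t_2) for n ≥ 2. -/

import Mathlib

/-- `(q)_n = (1-q)(1-q^2)⋯(1-q^n)`, with `(q)_0 = 1`. -/
noncomputable def qPoch {K : Type*} [Field K] (q : K) (n : ℕ) : K :=
  ∏ j ∈ Finset.range n, (1 - q ^ (j + 1))

/-- The two-variable Rogers-Szegő polynomial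
`H_n(t_1,t_2) = Σ_{k_1+k_2+k_3=n} C(n; k_1,k_2,k_3)_q t_1^{k_1} t_2^{k_2}`. -/
noncomputable def rogersSzego2 {K : Type*} [Field K] (q : K) (n : ℕ) (t₁ t₂ : K) : K :=
  ∑ k ∈ Finset.Nat.antidiagonalTuple 3 n,
    (qPoch q n / (qPoch q (k 0) * qPoch q (k 1) * qPoch q (k 2))) * t₁ ^ k 0 * t₂ ^ k 1

/-!
Write `H_n(t₁, t₂) = ∑_{|k| = n} [n; k]_q t^k` with `t = (t₁, t₂, 1)`. Multiplying by `t_i` and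
raising `k_i` by one turns a sum over `|k| = n` into one over `|k| = n + 1` whose coefficients
acquire the factor `(1 - q^{k_i}) / (1 - q^{n+1})`; this factor vanishes on the terms with
`k_i = 0` that the shift misses. After this rewriting every term of the recursion is a sum over
`|k| = n + 1`, and comparing coefficients leaves, with `x, y, z = q^{k_0}, q^{k_1}, q^{k_2}`,
the inclusion-exclusion identity `1 - xyz = 1 - (1 - (1 - x)) (1 - (1 - y)) (1 - (1 - z))`.
-/

open Finset Finset.Nat

variable {K : Type*} [Field K] {q : K}

theorem qPoch_succ (q : K) (n : ℕ) : qPoch q (n + 1) = qPoch q n * (1 - q ^ (n + 1)) :=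
  prod_range_succ _ _

theorem one_sub_pow_ne_zero (hq : ¬IsOfFinOrder q) {m : ℕ} (hm : m ≠ 0) : 1 - q ^ m ≠ 0 :=
  sub_ne_zero.2 fun h => hq <| isOfFinOrder_iff_pow_eq_one.2 ⟨m, Nat.pos_of_ne_zero hm, h.symm⟩

theorem qPoch_ne_zero (hq : ¬IsOfFinOrder q) (n : ℕ) : qPoch q n ≠ 0 :=
  prod_ne_zero_iff.2 fun j _ => one_sub_pow_ne_zero hq j.succ_ne_zero

theorem RatFunc.not_isOfFinOrder_X {F : Type*} [Field F] :
    ¬IsOfFinOrder (RatFunc.X : RatFunc F) := by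
  refine not_isOfFinOrder_of_injective_pow fun m n h => ?_
  have hdeg := congrArg RatFunc.intDegree h
  simp only [← RatFunc.algebraMap_X, ← map_pow, RatFunc.intDegree_polynomial,
    Polynomial.natDegree_X_pow] at hdeg
  exact_mod_cast hdeg

variable {p : ℕ}

theorem sum_antidiagonalTuple_succ {M : Type*} [AddCommMonoid M] (i : Fin p) (n : ℕ)
    (f : (Fin p → ℕ) → M) (hf : ∀ k, k i = 0 → f k = 0) :
    ∑ k ∈ antidiagonalTuple p (n + 1), f k =
      ∑ k ∈ antidiagonalTuple p n, f (k + Pi.single i 1) := by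
  have sum_add_single (k : Fin p → ℕ) :
      ∑ j, (k + Pi.single i 1 : Fin p → ℕ) j = ∑ j, k j + 1 := by
    simp [sum_add_distrib]
  symm
  refine sum_bij_ne_zero (fun k _ _ => k + Pi.single i 1) ?_ ?_ ?_ fun _ _ _ => rfl
  · intro k hk _
    rw [mem_antidiagonalTuple] at hk ⊢
    rw [sum_add_single, hk]
  · intro a _ _ b _ _ h
    exact add_right_cancel h
  · intro k hk hfk
    have hle : Pi.single i 1 ≤ k := by
      intro j
      rcases eq_or_ne j i with rfl | hj
      · simpa [Nat.one_le_iff_ne_zero] using fun h => hfk (hf k h)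
      · simp [hj]
    have hk' := tsub_add_cancel_of_le hle
    refine ⟨k - Pi.single i 1, ?_, by rwa [hk'], hk'⟩
    rw [mem_antidiagonalTuple] at hk ⊢
    have := sum_add_single (k - Pi.single i 1)
    rw [hk', hk] at this
    omega

noncomputable def qMultinomial (q : K) (k : Fin p → ℕ) : K :=
  qPoch q (∑ i, k i) / ∏ i, qPoch q (k i)

theorem qMultinomial_add_single_mul (hq : ¬IsOfFinOrder q) (k : Fin p → ℕ) (i : Fin p) :
    qMultinomial q (k + Pi.single i 1) * (1 - q ^ (k i + 1)) =
      qMultinomial q k * (1 - q ^ (∑ j, k j + 1)) := by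
  have hsum : ∑ j, (k + Pi.single i 1 : Fin p → ℕ) j = ∑ j, k j + 1 := by
    simp [sum_add_distrib]
  have hprod : ∏ j, qPoch q ((k + Pi.single i 1 : Fin p → ℕ) j) =
      (∏ j, qPoch q (k j)) * (1 - q ^ (k i + 1)) := by
    have (j : Fin p) : qPoch q ((k + Pi.single i 1 : Fin p → ℕ) j) =
        qPoch q (k j) * if j = i then 1 - q ^ (k i + 1) else 1 := by
      rcases eq_or_ne j i with rfl | hj
      · simp [qPoch_succ]
      · simp [hj]
    simp only [this, prod_mul_distrib, prod_ite_eq', mem_univ, if_true]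
  have hP : ∏ j, qPoch q (k j) ≠ 0 := prod_ne_zero_iff.2 fun j _ => qPoch_ne_zero hq _
  unfold qMultinomial
  rw [hsum, hprod, qPoch_succ]
  field_simp [one_sub_pow_ne_zero hq (k i).succ_ne_zero]

theorem prod_pow_add_single {M : Type*} [CommMonoid M] (t : Fin p → M) (k : Fin p → ℕ) (i : Fin p) :
    ∏ j, t j ^ (k + Pi.single i 1 : Fin p → ℕ) j = (∏ j, t j ^ k j) * t i := by
  simp only [Pi.add_apply, pow_add, prod_mul_distrib]
  congr 1
  exact (Fintype.prod_eq_single i fun j hj => by simp [hj]).trans (by simp)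

noncomputable def weightedRogersSzego (q : K) (t : Fin p → K) (n : ℕ)
    (w : (Fin p → ℕ) → K) : K :=
  ∑ k ∈ antidiagonalTuple p n, qMultinomial q k * w k * ∏ i, t i ^ k i

theorem mul_weightedRogersSzego (hq : ¬IsOfFinOrder q) (t : Fin p → K) (i : Fin p) (n : ℕ)
    (w : (Fin p → ℕ) → K) :
    t i * weightedRogersSzego q t n w = weightedRogersSzego q t (n + 1)
      fun k => (1 - q ^ k i) / (1 - q ^ (n + 1)) * w (k - Pi.single i 1) := by
  unfold weightedRogersSzego
  rw [sum_antidiagonalTuple_succ i n _ fun k hk => by simp [hk], mul_sum]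
  refine sum_congr rfl fun k hk => ?_
  rw [mem_antidiagonalTuple] at hk
  have hden : 1 - q ^ (n + 1) ≠ 0 := one_sub_pow_ne_zero hq n.succ_ne_zero
  have hshift := qMultinomial_add_single_mul hq k i
  rw [hk] at hshift
  rw [prod_pow_add_single]
  simp only [add_tsub_cancel_right, Pi.add_apply, Pi.single_eq_same]
  field_simp
  linear_combination -(w k * (∏ j, t j ^ k j) * t i) * hshift

theorem rogersSzego2_eq_weightedRogersSzego (q : K) (n : ℕ) (t₁ t₂ : K) :
    rogersSzego2 q n t₁ t₂ = weightedRogersSzego q ![t₁, t₂, 1] n 1 := by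
  refine sum_congr rfl fun k hk => ?_
  rw [mem_antidiagonalTuple] at hk
  simp [qMultinomial, hk, Fin.prod_univ_three, mul_assoc]

/- The factors `(P - 1) / (1 - P)` and `(R - 1) / (1 - R)` equal `-1`; they are kept in the shape
in which the coefficients `q ^ (n + 2) - 1` and `q ^ (n + 1) - 1` of the recursion meet the
denominators produced by `mul_weightedRogersSzego`. -/
theorem one_eq_inclusion_exclusion {x y z Q P R : K} (hxyz : x * y * z = Q) (hQ : 1 - Q ≠ 0)
    (hP : 1 - P ≠ 0) (hR : 1 - R ≠ 0) :
    1 = ((1 - x) + (1 - y) + (1 - z)) / (1 - Q) +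
      (P - 1) / (1 - P) * ((1 - x) * (1 - y) + (1 - x) * (1 - z) + (1 - y) * (1 - z)) / (1 - Q) +
      (P - 1) / (1 - P) * ((R - 1) / (1 - R)) * ((1 - x) * (1 - y) * (1 - z)) / (1 - Q) := by
  rw [← neg_sub 1 P, ← neg_sub 1 R, neg_div_self hP, neg_div_self hR]
  field_simp
  rw [← hxyz]
  ring

theorem rogersSzego2_add_three (hq : ¬IsOfFinOrder q) (n : ℕ) (t₁ t₂ : K) :
    rogersSzego2 q (n + 3) t₁ t₂ =
      (1 + t₁ + t₂) * rogersSzego2 q (n + 2) t₁ t₂ +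
        (t₁ * t₂ + t₁ + t₂) * (q ^ (n + 2) - 1) * rogersSzego2 q (n + 1) t₁ t₂ +
        t₁ * t₂ * (q ^ (n + 2) - 1) * (q ^ (n + 1) - 1) * rogersSzego2 q n t₁ t₂ := by
  set t : Fin 3 → K := ![t₁, t₂, 1]
  set W := weightedRogersSzego q t
  have key : W (n + 3) 1 = t 2 * W (n + 2) 1 + t 0 * W (n + 2) 1 + t 1 * W (n + 2) 1 +
      (q ^ (n + 2) - 1) * (t 0 * (t 1 * W (n + 1) 1) + t 0 * (t 2 * W (n + 1) 1) +
        t 1 * (t 2 * W (n + 1) 1)) +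
      (q ^ (n + 2) - 1) * (q ^ (n + 1) - 1) * (t 0 * (t 1 * (t 2 * W n 1))) := by
    simp only [W, mul_weightedRogersSzego hq]
    unfold weightedRogersSzego
    simp only [mul_sum, ← sum_add_distrib]
    refine sum_congr rfl fun k hk => ?_
    rw [mem_antidiagonalTuple, Fin.sum_univ_three] at hk
    have hxyz : q ^ k 0 * q ^ k 1 * q ^ k 2 = q ^ (n + 3) := by rw [← pow_add, ← pow_add, hk]
    have hne (m : ℕ) : 1 - q ^ (m + 1) ≠ 0 := one_sub_pow_ne_zero hq m.succ_ne_zero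
    have h := one_eq_inclusion_exclusion hxyz (hne (n + 2)) (hne (n + 1)) (hne n)
    simp only [Pi.one_apply, mul_one, Pi.sub_apply, ne_eq, Fin.reduceEq, not_false_eq_true,
      Pi.single_eq_of_ne, tsub_zero]
    linear_combination (qMultinomial q k * ∏ i, t i ^ k i) * h
  simp only [t, Matrix.cons_val_zero, Matrix.cons_val_one, Matrix.cons_val_two, Matrix.head_cons,
    Matrix.tail_cons] at key
  simp only [rogersSzego2_eq_weightedRogersSzego]
  linear_combination key

/-- `H_{n+1}(t_1,t_2) = (1+t_1+t_2)H_n + (t_1t_2+t_1+t_2)(q^n-1)H_{n-1}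
+ t_1t_2(q^n-1)(q^{n-1}-1)H_{n-2}` for `n ≥ 2`. -/
theorem rogersSzego2_recursion (n : ℕ) (hn : 2 ≤ n) (t₁ t₂ : RatFunc ℚ) :
    rogersSzego2 (RatFunc.X : RatFunc ℚ) (n + 1) t₁ t₂ =
      (1 + t₁ + t₂) * rogersSzego2 (RatFunc.X : RatFunc ℚ) n t₁ t₂ +
        (t₁ * t₂ + t₁ + t₂) * ((RatFunc.X : RatFunc ℚ) ^ n - 1) *
          rogersSzego2 (RatFunc.X : RatFunc ℚ) (n - 1) t₁ t₂ +
        t₁ * t₂ * ((RatFunc.X : RatFunc ℚ) ^ n - 1) * ((RatFunc.X : RatFunc ℚ) ^ (n - 1) - 1) *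
          rogersSzego2 (RatFunc.X : RatFunc ℚ) (n - 2) t₁ t₂ := by
  obtain ⟨m, rfl⟩ := Nat.exists_eq_add_of_le' hn
  exact rogersSzego2_add_three RatFunc.not_isOfFinOrder_X m t₁ t₂
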